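/- Suppose 2β ∈ ℤ_{≥0} and let P(t) = ∏_{n=0}^{2β}(t/2 + β − n) ∈ ℂ[t]. Then the ideal V = ℂ[s,t]·P(t) is invariant under all the operators defining the module Θ(λ, α, β, γ): specifically, for the operator E_i(g)(s,t) = λ^i·α·(t/2 + β)·g(s−i, t−2), one has E_i(g·P)(s,t) = λ^i·α·(t/2 − β − 1)·g(s−i, t−2)·P(t), so E_i maps V into V; similarly F_i(g·P)(s,t) = −(λ^i/α)·(t/2 + β + 1)·g(s−i, t+2)·P(t), so F_i maps V into V. -/

import Mathlib

open MvPolynomial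

abbrev R2 : Type := MvPolynomial (Fin 2) ℂ

/-- Substitution `g(s,t) ↦ g(s - u, t + v)`. -/
noncomputable def sh (u v : ℂ) : R2 →ₐ[ℂ] R2 := aeval ![X 0 - C u, X 1 + C v]

/-- Action of `e_i` in `Θ(λ,α,β,γ)`. -/
noncomputable def thE (lam a b : ℂ) (i : ℤ) (g : R2) : R2 :=
  C (lam ^ i * a) * (C 2⁻¹ * X 1 + C b) * sh (i : ℂ) (-2) g

/-- Action of `f_i` in `Θ(λ,α,β,γ)`. -/
noncomputable def thF (lam a b : ℂ) (i : ℤ) (g : R2) : R2 :=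
  C (-(lam ^ i / a)) * (C 2⁻¹ * X 1 - C b) * sh (i : ℂ) 2 g

/-- Action of `h_i`. -/
noncomputable def opH (lam : ℂ) (i : ℤ) (g : R2) : R2 :=
  C (lam ^ i) * X 1 * sh (i : ℂ) 0 g

/-- Action of `d_i`. -/
noncomputable def opD (lam c : ℂ) (i : ℤ) (g : R2) : R2 :=
  C (lam ^ i) * (X 0 + C ((i : ℂ) * c)) * sh (i : ℂ) 0 g

open Finset

/-
Write `ℓ c = t/2 + c`, so `P = ∏_{n ≤ N} ℓ (β - n)`. The shifts `t ↦ t ∓ 2` turn `ℓ c` into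
`ℓ (c ∓ 1)`, so the shifted `P` is the same product with its roots moved by one step. The
coefficient `ℓ β` of `E_i` (resp. `ℓ (-β) = ℓ (β + 1 - (N + 1))` of `F_i`, as `2β = N`) is exactly
the factor missing at one end, and the product telescopes back to `P` times the factor at the other
end, `ℓ (β - (N + 1)) = ℓ (-β - 1)` (resp. `ℓ (β + 1)`).
-/

theorem Finset.mul_prod_range_succ_eq_mul_prod_range {M : Type*} [CommMonoid M] (f : ℕ → M)
    (m : ℕ) : f 0 * ∏ n ∈ range m, f (n + 1) = f m * ∏ n ∈ range m, f n := by
  rw [mul_comm, ← prod_range_succ', prod_range_succ_comm]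

lemma sh_halfX_add_C (u v c : ℂ) :
    sh u v (C 2⁻¹ * X 1 + C c) = C 2⁻¹ * X 1 + C (c + 2⁻¹ * v) := by
  simp only [sh, map_add, map_mul, aeval_C, aeval_X, algebraMap_eq, Matrix.cons_val_one,
    Matrix.cons_val_zero]
  ring

lemma sh_prod_halfX_add_C (u v b : ℂ) (m : ℕ) :
    sh u v (∏ n ∈ range m, (C 2⁻¹ * X 1 + C (b - n))) =
      ∏ n ∈ range m, (C 2⁻¹ * X 1 + C (b + 2⁻¹ * v - n)) := by
  simp only [map_prod, sh_halfX_add_C, sub_add_eq_add_sub]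

lemma halfX_add_C_mul_sh_neg_two_prod (u b : ℂ) (m : ℕ) :
    (C 2⁻¹ * X 1 + C b) * sh u (-2) (∏ n ∈ range m, (C 2⁻¹ * X 1 + C (b - n))) =
      (C 2⁻¹ * X 1 + C (b - m)) * ∏ n ∈ range m, (C 2⁻¹ * X 1 + C (b - n)) := by
  have := mul_prod_range_succ_eq_mul_prod_range (fun n : ℕ ↦ (C 2⁻¹ * X 1 + C (b - n) : R2)) m
  rw [sh_prod_halfX_add_C]
  convert this using 3 <;> push_cast <;> ring_nf

lemma halfX_add_C_mul_sh_two_prod (u b : ℂ) (m : ℕ) :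
    (C 2⁻¹ * X 1 + C (b + 1 - m)) * sh u 2 (∏ n ∈ range m, (C 2⁻¹ * X 1 + C (b - n))) =
      (C 2⁻¹ * X 1 + C (b + 1)) * ∏ n ∈ range m, (C 2⁻¹ * X 1 + C (b - n)) := by
  have := mul_prod_range_succ_eq_mul_prod_range
    (fun n : ℕ ↦ (C 2⁻¹ * X 1 + C (b + 1 - n) : R2)) m
  rw [sh_prod_halfX_add_C]
  convert this.symm using 3 <;> push_cast <;> ring_nf

lemma thE_mul (lam a b : ℂ) (i : ℤ) (g h : R2) :
    thE lam a b i (g * h) =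
      C (lam ^ i * a) * sh (i : ℂ) (-2) g * ((C 2⁻¹ * X 1 + C b) * sh (i : ℂ) (-2) h) := by
  rw [thE, map_mul (sh _ _)]; ring

lemma thF_mul (lam a b : ℂ) (i : ℤ) (g h : R2) :
    thF lam a b i (g * h) =
      C (-(lam ^ i / a)) * sh (i : ℂ) 2 g * ((C 2⁻¹ * X 1 - C b) * sh (i : ℂ) 2 h) := by
  rw [thF, map_mul (sh _ _)]; ring

theorem stmt8_general (lam a : ℂ) (b : ℂ)
    (N : ℕ) (hN : (N : ℂ) = 2 * b)
    (P : R2) (hP : P = ∏ n ∈ Finset.range (N + 1), (C 2⁻¹ * X 1 + C (b - (n : ℂ))))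
    (i : ℤ) (g : R2) :
    thE lam a b i (g * P)
        = C (lam ^ i * a) * (C 2⁻¹ * X 1 - C b - 1) * sh (i : ℂ) (-2) g * P ∧
    thF lam a b i (g * P)
        = C (-(lam ^ i / a)) * (C 2⁻¹ * X 1 + C b + 1) * sh (i : ℂ) 2 g * P ∧
    thE lam a b i (g * P) ∈ Ideal.span {P} ∧
    thF lam a b i (g * P) ∈ Ideal.span {P} := by
  have hlow : b - ((N + 1 : ℕ) : ℂ) = -b - 1 := by push_cast; linear_combination -hN
  have hhigh : b + 1 - ((N + 1 : ℕ) : ℂ) = -b := by push_cast; linear_combination -hN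
  have hE : thE lam a b i (g * P)
      = C (lam ^ i * a) * (C 2⁻¹ * X 1 - C b - 1) * sh (i : ℂ) (-2) g * P := by
    rw [thE_mul, hP, halfX_add_C_mul_sh_neg_two_prod, hlow, map_sub, map_neg, map_one]; ring
  have hF : thF lam a b i (g * P)
      = C (-(lam ^ i / a)) * (C 2⁻¹ * X 1 + C b + 1) * sh (i : ℂ) 2 g * P := by
    have key := halfX_add_C_mul_sh_two_prod (i : ℂ) b (N + 1)
    rw [hhigh, map_neg, ← sub_eq_add_neg] at key
    rw [thF_mul, hP, key, map_add, map_one]; ring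
  have hPmem := Ideal.mem_span_singleton_self P
  exact ⟨hE, hF, hE ▸ Ideal.mul_mem_left _ _ hPmem, hF ▸ Ideal.mul_mem_left _ _ hPmem⟩

theorem stmt8 (lam a : ℂ) (hlam : lam ≠ 0) (ha : a ≠ 0) (b : ℂ)
    (N : ℕ) (hN : (N : ℂ) = 2 * b)
    (P : R2) (hP : P = ∏ n ∈ Finset.range (N + 1), (C 2⁻¹ * X 1 + C (b - (n : ℂ))))
    (i : ℤ) (g : R2) :
    thE lam a b i (g * P)
        = C (lam ^ i * a) * (C 2⁻¹ * X 1 - C b - 1) * sh (i : ℂ) (-2) g * P ∧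
    thF lam a b i (g * P)
        = C (-(lam ^ i / a)) * (C 2⁻¹ * X 1 + C b + 1) * sh (i : ℂ) 2 g * P ∧
    thE lam a b i (g * P) ∈ Ideal.span {P} ∧
    thF lam a b i (g * P) ∈ Ideal.span {P} :=
  stmt8_general lam a b N hN P hP i g
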